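/- Let d ≥ 1, 0 < α ≤ 2, 0 < β ≤ 1, α < γ ≤ d, d > α, and assume d > (α(2+β) - γ)/β. Let φ be a nonnegative Schwartz function on ℝ^d and define Gψ(x) = ∫_{ℝ^d} ψ(y)|x-y|^{α-d} dy. Then ∫_{ℝ^d} G((Gφ)^{1+β})(x) (1 + |x|^γ)^{-1} dx < ∞. -/

import Mathlib

/-! Write `a = d - α`, so that the kernel of `G` is `|x|^(-a)`. The basic estimate is
`∫ |x - y|^(-a) (1 + |x|)^(-c) dx ≲ (1 + |y|)^(-c')` for `0 ≤ c' ≤ a` and `c' < a + c - d`: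
where `|x - y| ≤ (1 + |y|)/2` the factor `1 + |x|` is comparable to `1 + |y|`, and elsewhere
`|x - y|` dominates both `1 + |y|` and `1 + |x|`. Applied to the rapidly decaying `φ` it gives
`Gφ(y) ≲ (1 + |y|)^(-a)`, so `(Gφ)^(1+β) ≲ (1 + |y|)^(-a(1+β))`. By Tonelli and the same
estimate with `c = γ`, the weighted integral is at most a multiple of
`∫ (1 + |y|)^(-a(1+β) - q) dy` for every `0 < q < γ - α`. This is finite once `q > d - a(1+β)`,
and such a `q` exists exactly when `d < a(1+β) + γ - α`, which is the dimension condition. -/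

open MeasureTheory

noncomputable def rieszG (d : ℕ) (α : ℝ) (ψ : EuclideanSpace ℝ (Fin d) → ℝ)
    (x : EuclideanSpace ℝ (Fin d)) : ℝ :=
  ∫ y : EuclideanSpace ℝ (Fin d), ψ y * ‖x - y‖ ^ (α - d)

open Module Metric
open scoped ENNReal

lemma rpow_neg_le_mul_rpow_neg {t A k p : ℝ} (hA : 0 < A) (hk : 0 < k) (hAt : A ≤ k * t)
    (hp : 0 ≤ p) : t ^ (-p) ≤ k ^ p * A ^ (-p) :=
  calc t ^ (-p) ≤ (A / k) ^ (-p) :=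
        Real.rpow_le_rpow_of_nonpos (by positivity) ((div_le_iff₀' hk).2 hAt) (by linarith)
    _ = k ^ p * A ^ (-p) := by
        rw [Real.div_rpow hA.le hk.le, Real.rpow_neg hk.le, div_inv_eq_mul, mul_comm]

lemma rpow_neg_norm_sub_mul_le {E : Type*} [SeminormedAddCommGroup E] {a c c' : ℝ}
    (hc' : 0 ≤ c') (hc'a : c' ≤ a) (hc'c : c' ≤ c) (x y : E) :
    ‖x - y‖ ^ (-a) * (1 + ‖x‖) ^ (-c) ≤ 2 ^ c' * (1 + ‖y‖) ^ (-c') *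
      (3 ^ (c - c') * (‖x - y‖ ^ (-a) * (1 + ‖x - y‖) ^ (-(c - c'))) +
        3 ^ (a - c') * (1 + ‖x‖) ^ (-(a + c - c'))) := by
  have hxy := norm_sub_norm_le x y
  have hyx : ‖y‖ - ‖x‖ ≤ ‖x - y‖ := norm_sub_rev x y ▸ norm_sub_norm_le y x
  have hu := norm_nonneg (x - y)
  have hx := norm_nonneg x
  have hy := norm_nonneg y
  rcases le_or_gt (2 * ‖x - y‖) (1 + ‖y‖) with hnear | hfar
  · have key : (1 + ‖x‖) ^ (-c) ≤
        2 ^ c' * 3 ^ (c - c') * ((1 + ‖y‖) ^ (-c') * (1 + ‖x - y‖) ^ (-(c - c'))) := by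
      calc (1 + ‖x‖) ^ (-c) = (1 + ‖x‖) ^ (-c') * (1 + ‖x‖) ^ (-(c - c')) := by
            rw [← Real.rpow_add (by positivity)]; ring_nf
        _ ≤ (2 ^ c' * (1 + ‖y‖) ^ (-c')) * (3 ^ (c - c') * (1 + ‖x - y‖) ^ (-(c - c'))) := by
            gcongr
            · exact rpow_neg_le_mul_rpow_neg (by positivity) two_pos (by linarith) hc'
            · exact rpow_neg_le_mul_rpow_neg (by positivity) three_pos (by linarith) (by linarith)
        _ = _ := by ring
    have hrest :
        0 ≤ 2 ^ c' * (1 + ‖y‖) ^ (-c') * (3 ^ (a - c') * (1 + ‖x‖) ^ (-(a + c - c'))) := by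
      positivity
    calc ‖x - y‖ ^ (-a) * (1 + ‖x‖) ^ (-c)
        ≤ ‖x - y‖ ^ (-a) * (2 ^ c' * 3 ^ (c - c') *
            ((1 + ‖y‖) ^ (-c') * (1 + ‖x - y‖) ^ (-(c - c')))) := by gcongr
      _ ≤ _ := by linarith
  · have hpos : 0 < ‖x - y‖ := by linarith
    have key : ‖x - y‖ ^ (-a) ≤
        2 ^ c' * 3 ^ (a - c') * ((1 + ‖y‖) ^ (-c') * (1 + ‖x‖) ^ (-(a - c'))) := by
      calc ‖x - y‖ ^ (-a) = ‖x - y‖ ^ (-c') * ‖x - y‖ ^ (-(a - c')) := by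
            rw [← Real.rpow_add hpos]; ring_nf
        _ ≤ (2 ^ c' * (1 + ‖y‖) ^ (-c')) * (3 ^ (a - c') * (1 + ‖x‖) ^ (-(a - c'))) := by
            gcongr
            · exact rpow_neg_le_mul_rpow_neg (by positivity) two_pos hfar.le hc'
            · exact rpow_neg_le_mul_rpow_neg (by positivity) three_pos (by linarith) (by linarith)
        _ = _ := by ring
    have hsplit : (1 + ‖x‖) ^ (-(a - c')) * (1 + ‖x‖) ^ (-c) = (1 + ‖x‖) ^ (-(a + c - c')) := by
      rw [← Real.rpow_add (by positivity)]; ring_nf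
    have hrest : 0 ≤ 2 ^ c' * (1 + ‖y‖) ^ (-c') *
        (3 ^ (c - c') * (‖x - y‖ ^ (-a) * (1 + ‖x - y‖) ^ (-(c - c')))) := by
      positivity
    calc ‖x - y‖ ^ (-a) * (1 + ‖x‖) ^ (-c)
        ≤ 2 ^ c' * 3 ^ (a - c') * ((1 + ‖y‖) ^ (-c') * (1 + ‖x‖) ^ (-(a - c'))) *
            (1 + ‖x‖) ^ (-c) := by gcongr
      _ = 2 ^ c' * (1 + ‖y‖) ^ (-c') * (3 ^ (a - c') * (1 + ‖x‖) ^ (-(a + c - c'))) := by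
        rw [← hsplit]; ring
      _ ≤ _ := by linarith

section HaarMeasure

variable {E : Type*} [NormedAddCommGroup E] [NormedSpace ℝ E] [FiniteDimensional ℝ E]
  [MeasurableSpace E] [BorelSpace E] (μ : Measure E) [μ.IsAddHaarMeasure]

lemma integrable_rpow_neg_norm_mul_one_add_norm_rpow_neg {a e : ℝ} (ha : 0 ≤ a)
    (had : a < finrank ℝ E) (hae : finrank ℝ E < a + e) :
    Integrable (fun u : E ↦ ‖u‖ ^ (-a) * (1 + ‖u‖) ^ (-e)) μ := by
  have he : 0 ≤ e := by linarith
  have hmeas : AEStronglyMeasurable (fun u : E ↦ ‖u‖ ^ (-a) * (1 + ‖u‖) ^ (-e)) μ := by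
    fun_prop
  have hball : IntegrableOn (fun u : E ↦ ‖u‖ ^ (-a) * (1 + ‖u‖) ^ (-e)) (ball 0 1) μ := by
    have hE : 0 < finrank ℝ E := by exact_mod_cast (by linarith : (0 : ℝ) < finrank ℝ E)
    refine integrableOn_ball_of_norm_le_rpow (C := 1) hE had (ae_of_all _ fun u ↦ ?_) hmeas
    rw [one_mul, Real.norm_of_nonneg (by positivity)]
    exact mul_le_of_le_one_right (by positivity)
      (Real.rpow_le_one_of_one_le_of_nonpos (by simp) (by linarith))
  have hfar : IntegrableOn (fun u : E ↦ ‖u‖ ^ (-a) * (1 + ‖u‖) ^ (-e)) (ball 0 1)ᶜ μ := by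
    refine Integrable.mono' ((integrable_one_add_norm (μ := μ) hae).const_mul (2 ^ a)).integrableOn
      hmeas.restrict ((ae_restrict_iff' measurableSet_ball.compl).2 (ae_of_all _ fun u hu ↦ ?_))
    have hu : 1 ≤ ‖u‖ := by simpa using hu
    rw [Real.norm_of_nonneg (by positivity), neg_add, Real.rpow_add (by positivity), ← mul_assoc]
    gcongr
    exact rpow_neg_le_mul_rpow_neg (by positivity) two_pos (by linarith) ha
  simpa using hball.union hfar

lemma exists_lintegral_rpow_neg_norm_sub_mul_le {a c c' : ℝ} (had : a < finrank ℝ E)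
    (hc' : 0 ≤ c') (hc'a : c' ≤ a) (hc'c : c' < a + c - finrank ℝ E) :
    ∃ C : ℝ≥0∞, C ≠ ∞ ∧ ∀ y : E,
      ∫⁻ x, ENNReal.ofReal (‖x - y‖ ^ (-a) * (1 + ‖x‖) ^ (-c)) ∂μ ≤
        C * ENNReal.ofReal ((1 + ‖y‖) ^ (-c')) := by
  set I := ∫⁻ u, ENNReal.ofReal (‖u‖ ^ (-a) * (1 + ‖u‖) ^ (-(c - c'))) ∂μ
  set J := ∫⁻ x, ENNReal.ofReal ((1 + ‖x‖) ^ (-(a + c - c'))) ∂μ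
  have hI : I ≠ ∞ := (integrable_rpow_neg_norm_mul_one_add_norm_rpow_neg μ (by linarith) had
    (by linarith)).lintegral_lt_top.ne
  have hJ : J ≠ ∞ := (integrable_one_add_norm (μ := μ) (by linarith)).lintegral_lt_top.ne
  refine ⟨ENNReal.ofReal (2 ^ c') * (ENNReal.ofReal (3 ^ (c - c')) * I +
    ENNReal.ofReal (3 ^ (a - c')) * J), by finiteness, fun y ↦ ?_⟩
  calc ∫⁻ x, ENNReal.ofReal (‖x - y‖ ^ (-a) * (1 + ‖x‖) ^ (-c)) ∂μ
      ≤ ∫⁻ x, ENNReal.ofReal (2 ^ c' * (1 + ‖y‖) ^ (-c')) *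
          (ENNReal.ofReal (3 ^ (c - c')) *
              ENNReal.ofReal (‖x - y‖ ^ (-a) * (1 + ‖x - y‖) ^ (-(c - c'))) +
            ENNReal.ofReal (3 ^ (a - c')) * ENNReal.ofReal ((1 + ‖x‖) ^ (-(a + c - c')))) ∂μ := by
        refine lintegral_mono fun x ↦ ?_
        rw [← ENNReal.ofReal_mul (by positivity), ← ENNReal.ofReal_mul (by positivity),
          ← ENNReal.ofReal_add (by positivity) (by positivity),
          ← ENNReal.ofReal_mul (by positivity)]
        exact ENNReal.ofReal_le_ofReal (rpow_neg_norm_sub_mul_le hc' hc'a (by linarith) x y)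
    _ = ENNReal.ofReal (2 ^ c' * (1 + ‖y‖) ^ (-c')) *
          (ENNReal.ofReal (3 ^ (c - c')) * I + ENNReal.ofReal (3 ^ (a - c')) * J) := by
        rw [lintegral_const_mul _ (by fun_prop), lintegral_add_left (by fun_prop),
          lintegral_const_mul _ (by fun_prop), lintegral_const_mul _ (by fun_prop),
          lintegral_sub_right_eq_self
            (fun u ↦ ENNReal.ofReal (‖u‖ ^ (-a) * (1 + ‖u‖) ^ (-(c - c')))) y]
    _ = _ := by rw [ENNReal.ofReal_mul (by positivity)]; ring

end HaarMeasure

lemma ofReal_integral_le_lintegral_ofReal {X : Type*} [MeasurableSpace X] {μ : Measure X}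
    {f : X → ℝ} (hf : ∀ x, 0 ≤ f x) :
    ENNReal.ofReal (∫ x, f x ∂μ) ≤ ∫⁻ x, ENNReal.ofReal (f x) ∂μ := by
  by_cases hi : Integrable f μ
  · rw [ofReal_integral_eq_lintegral_ofReal hi (ae_of_all _ hf)]
  · simp [integral_undef hi]

lemma SchwartzMap.exists_norm_le_mul_one_add_norm_rpow_neg {E F : Type*}
    [NormedAddCommGroup E] [NormedSpace ℝ E] [NormedAddCommGroup F] [NormedSpace ℝ F]
    (f : SchwartzMap E F) (k : ℕ) : ∃ C, ∀ x, ‖f x‖ ≤ C * (1 + ‖x‖) ^ (-(k : ℝ)) := by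
  refine ⟨2 ^ k * (Finset.Iic (k, 0)).sup (fun m ↦ SchwartzMap.seminorm ℝ m.1 m.2) f,
    fun x ↦ ?_⟩
  have h := one_add_le_sup_seminorm_apply (𝕜 := ℝ) (m := (k, 0)) le_rfl le_rfl f x
  rw [norm_iteratedFDeriv_zero] at h
  rw [Real.rpow_neg (by positivity), Real.rpow_natCast, ← div_eq_mul_inv,
    le_div_iff₀ (by positivity), mul_comm]
  exact h

lemma inv_one_add_rpow_le {t γ : ℝ} (ht : 0 ≤ t) (hγ : 0 ≤ γ) :
    (1 + t ^ γ)⁻¹ ≤ 2 ^ γ * (1 + t) ^ (-γ) := by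
  have key : (1 + t) ^ γ ≤ 2 ^ γ * (1 + t ^ γ) := by
    rcases le_total t 1 with h | h
    · calc (1 + t) ^ γ ≤ 2 ^ γ := by gcongr; linarith
        _ ≤ 2 ^ γ * (1 + t ^ γ) := le_mul_of_one_le_right (by positivity) (by simp; positivity)
    · calc (1 + t) ^ γ ≤ (2 * t) ^ γ := by gcongr; linarith
        _ = 2 ^ γ * t ^ γ := Real.mul_rpow (by norm_num) ht
        _ ≤ 2 ^ γ * (1 + t ^ γ) := by gcongr; linarith
  rw [Real.rpow_neg (by positivity), ← div_eq_mul_inv, le_div_iff₀ (by positivity),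
    inv_mul_eq_div, div_le_iff₀ (by positivity)]
  linarith

section RieszPotential

variable {d : ℕ} {α : ℝ} {ψ : EuclideanSpace ℝ (Fin d) → ℝ}

lemma rieszG_nonneg (hψ : ∀ y, 0 ≤ ψ y) (x : EuclideanSpace ℝ (Fin d)) : 0 ≤ rieszG d α ψ x :=
  integral_nonneg fun y ↦ mul_nonneg (hψ y) (by positivity)

lemma ofReal_rieszG_le_lintegral (hψ : ∀ y, 0 ≤ ψ y) (x : EuclideanSpace ℝ (Fin d)) :
    ENNReal.ofReal (rieszG d α ψ x) ≤
      ∫⁻ y, ENNReal.ofReal (ψ y) * ENNReal.ofReal (‖x - y‖ ^ (-(d - α))) := by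
  refine (ofReal_integral_le_lintegral_ofReal fun y ↦ mul_nonneg (hψ y) (by positivity)).trans ?_
  simp_rw [neg_sub, ENNReal.ofReal_mul (hψ _), le_refl]

lemma exists_rieszG_le_mul_one_add_norm_rpow_neg {c K : ℝ} (hα : 0 < α) (hαd : α ≤ d)
    (hc : d < c) (hψ0 : ∀ y, 0 ≤ ψ y) (hψ : ∀ y, ψ y ≤ K * (1 + ‖y‖) ^ (-c)) :
    ∃ M, 0 ≤ M ∧ ∀ x, rieszG d α ψ x ≤ M * (1 + ‖x‖) ^ (-(d - α)) := by
  obtain ⟨C, hC, hK⟩ := exists_lintegral_rpow_neg_norm_sub_mul_le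
    (volume : Measure (EuclideanSpace ℝ (Fin d))) (a := d - α) (c := c) (c' := d - α)
    (by simp; linarith) (by linarith) le_rfl (by simp; linarith)
  refine ⟨(ENNReal.ofReal K * C).toReal, ENNReal.toReal_nonneg, fun x ↦ ?_⟩
  rw [← ENNReal.ofReal_le_ofReal_iff (by positivity)]
  calc ENNReal.ofReal (rieszG d α ψ x)
      ≤ ∫⁻ y, ENNReal.ofReal (ψ y) * ENNReal.ofReal (‖x - y‖ ^ (-(d - α))) :=
        ofReal_rieszG_le_lintegral hψ0 x
    _ ≤ ∫⁻ y, ENNReal.ofReal K * ENNReal.ofReal (‖y - x‖ ^ (-(d - α)) * (1 + ‖y‖) ^ (-c)) := by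
        refine lintegral_mono fun y ↦ ?_
        calc ENNReal.ofReal (ψ y) * ENNReal.ofReal (‖x - y‖ ^ (-(d - α)))
            ≤ ENNReal.ofReal (K * (1 + ‖y‖) ^ (-c)) * ENNReal.ofReal (‖y - x‖ ^ (-(d - α))) := by
              rw [norm_sub_rev]; gcongr; exact hψ y
          _ = _ := by
              rw [ENNReal.ofReal_mul' (by positivity), ENNReal.ofReal_mul (by positivity)]; ring
    _ = ENNReal.ofReal K * ∫⁻ y, ENNReal.ofReal (‖y - x‖ ^ (-(d - α)) * (1 + ‖y‖) ^ (-c)) :=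
        lintegral_const_mul _ (by fun_prop)
    _ ≤ ENNReal.ofReal K * (C * ENNReal.ofReal ((1 + ‖x‖) ^ (-(d - α)))) := by gcongr; exact hK x
    _ = _ := by
        rw [ENNReal.ofReal_mul ENNReal.toReal_nonneg,
          ENNReal.ofReal_toReal (ENNReal.mul_ne_top ENNReal.ofReal_ne_top hC), mul_assoc]

lemma lintegral_rieszG_mul_one_add_norm_rpow_neg_lt_top {γ p K : ℝ} (hα : 0 < α)
    (hαγ : α < γ) (hγd : γ ≤ d) (hp : d < p + γ - α) (hψ0 : ∀ y, 0 ≤ ψ y)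
    (hψ : ∀ y, ψ y ≤ K * (1 + ‖y‖) ^ (-p)) :
    ∫⁻ x, ENNReal.ofReal (rieszG d α ψ x * (1 + ‖x‖) ^ (-γ)) < ∞ := by
  obtain ⟨q, hq, hqγ⟩ :=
    exists_between (max_lt (sub_pos.2 hαγ) (by linarith : (d : ℝ) - p < γ - α))
  obtain ⟨hq0, hpq⟩ := max_lt_iff.1 hq
  obtain ⟨C, hC, hK⟩ := exists_lintegral_rpow_neg_norm_sub_mul_le
    (volume : Measure (EuclideanSpace ℝ (Fin d))) (a := d - α) (c := γ) (c' := q)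
    (by simp; linarith) hq0.le (by linarith) (by simp; linarith)
  calc ∫⁻ x, ENNReal.ofReal (rieszG d α ψ x * (1 + ‖x‖) ^ (-γ))
      ≤ ∫⁻ x, ∫⁻ y, ENNReal.ofReal (K * (1 + ‖y‖) ^ (-p)) *
          ENNReal.ofReal (‖x - y‖ ^ (-(d - α)) * (1 + ‖x‖) ^ (-γ)) := by
        refine lintegral_mono fun x ↦ ?_
        rw [ENNReal.ofReal_mul (rieszG_nonneg hψ0 x)]
        calc ENNReal.ofReal (rieszG d α ψ x) * ENNReal.ofReal ((1 + ‖x‖) ^ (-γ))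
            ≤ (∫⁻ y, ENNReal.ofReal (ψ y) * ENNReal.ofReal (‖x - y‖ ^ (-(d - α)))) *
                ENNReal.ofReal ((1 + ‖x‖) ^ (-γ)) := by
              gcongr; exact ofReal_rieszG_le_lintegral hψ0 x
          _ = ∫⁻ y, ENNReal.ofReal (ψ y) * ENNReal.ofReal (‖x - y‖ ^ (-(d - α))) *
                ENNReal.ofReal ((1 + ‖x‖) ^ (-γ)) :=
              (lintegral_mul_const' _ _ ENNReal.ofReal_ne_top).symm
          _ ≤ _ := by
              refine lintegral_mono fun y ↦ ?_
              rw [mul_assoc, ← ENNReal.ofReal_mul (by positivity)]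
              gcongr
              exact hψ y
    _ = ∫⁻ y, ENNReal.ofReal (K * (1 + ‖y‖) ^ (-p)) *
          ∫⁻ x, ENNReal.ofReal (‖x - y‖ ^ (-(d - α)) * (1 + ‖x‖) ^ (-γ)) := by
        rw [lintegral_lintegral_swap (by fun_prop)]
        congr with y
        exact lintegral_const_mul _ (by fun_prop)
    _ ≤ ∫⁻ y, ENNReal.ofReal (K * (1 + ‖y‖) ^ (-p)) *
          (C * ENNReal.ofReal ((1 + ‖y‖) ^ (-q))) := by
        gcongr with y
        exact hK y
    _ = ENNReal.ofReal K * C * ∫⁻ y, ENNReal.ofReal ((1 + ‖y‖) ^ (-(p + q))) := by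
        rw [← lintegral_const_mul' _ _ (by finiteness)]
        congr with y
        rw [ENNReal.ofReal_mul' (by positivity), neg_add, Real.rpow_add (by positivity),
          ENNReal.ofReal_mul (by positivity)]
        ring
    _ < ∞ := ENNReal.mul_lt_top (by finiteness)
        (integrable_one_add_norm (by simp; linarith)).lintegral_lt_top

end RieszPotential

theorem stmt18_general (d : ℕ) (α β γ : ℝ) (hα : 0 < α)
    (hβ : 0 < β) (hαγ : α < γ) (hγd : γ ≤ d) (hdα : α < d)
    (hdim : (α * (2 + β) - γ) / β < d)
    (φ : SchwartzMap (EuclideanSpace ℝ (Fin d)) ℝ) (hφ : ∀ x, 0 ≤ φ x) :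
    (∫⁻ x : EuclideanSpace ℝ (Fin d),
        ENNReal.ofReal
          (rieszG d α (fun y => (rieszG d α (fun z => φ z) y) ^ (1 + β)) x *
            (1 + ‖x‖ ^ γ)⁻¹)) < ⊤ := by
  obtain ⟨Cφ, hCφ⟩ := φ.exists_norm_le_mul_one_add_norm_rpow_neg (d + 1)
  obtain ⟨M, hM0, hM⟩ := exists_rieszG_le_mul_one_add_norm_rpow_neg (ψ := fun z ↦ φ z) hα
    hdα.le (by push_cast; linarith) hφ fun z ↦ (Real.le_norm_self _).trans (hCφ z)
  have hG0 := rieszG_nonneg (α := α) hφ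
  have hF : ∀ y, rieszG d α (fun z ↦ φ z) y ^ (1 + β) ≤
      M ^ (1 + β) * (1 + ‖y‖) ^ (-((d - α) * (1 + β))) := fun y ↦
    calc rieszG d α (fun z ↦ φ z) y ^ (1 + β) ≤ (M * (1 + ‖y‖) ^ (-(d - α))) ^ (1 + β) := by
          gcongr
          exacts [hG0 y, hM y]
      _ = _ := by
          rw [Real.mul_rpow hM0 (by positivity), ← Real.rpow_mul (by positivity), neg_mul]
  calc ∫⁻ x, ENNReal.ofReal
        (rieszG d α (fun y ↦ rieszG d α (fun z ↦ φ z) y ^ (1 + β)) x * (1 + ‖x‖ ^ γ)⁻¹)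
      ≤ ∫⁻ x, ENNReal.ofReal (2 ^ γ) * ENNReal.ofReal
          (rieszG d α (fun y ↦ rieszG d α (fun z ↦ φ z) y ^ (1 + β)) x * (1 + ‖x‖) ^ (-γ)) := by
        refine lintegral_mono fun x ↦ ?_
        rw [← ENNReal.ofReal_mul (by positivity), mul_left_comm]
        gcongr
        · exact rieszG_nonneg (fun y ↦ Real.rpow_nonneg (hG0 y) _) x
        · exact inv_one_add_rpow_le (norm_nonneg x) (by linarith)
    _ < ⊤ := by
        rw [lintegral_const_mul' _ _ ENNReal.ofReal_ne_top]
        exact ENNReal.mul_lt_top ENNReal.ofReal_lt_top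
          (lintegral_rieszG_mul_one_add_norm_rpow_neg_lt_top hα hαγ hγd
            (by linarith [(div_lt_iff₀ hβ).1 hdim])
            (fun y ↦ Real.rpow_nonneg (hG0 y) _) hF)

theorem stmt18 (d : ℕ) (hd : 1 ≤ d) (α β γ : ℝ) (hα : 0 < α) (hα2 : α ≤ 2)
    (hβ : 0 < β) (hβ1 : β ≤ 1) (hαγ : α < γ) (hγd : γ ≤ d) (hdα : α < d)
    (hdim : (α * (2 + β) - γ) / β < d)
    (φ : SchwartzMap (EuclideanSpace ℝ (Fin d)) ℝ) (hφ : ∀ x, 0 ≤ φ x) :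
    (∫⁻ x : EuclideanSpace ℝ (Fin d),
        ENNReal.ofReal
          (rieszG d α (fun y => (rieszG d α (fun z => φ z) y) ^ (1 + β)) x *
            (1 + ‖x‖ ^ γ)⁻¹)) < ⊤ :=
  stmt18_general d α β γ hα hβ hαγ hγd hdα hdim φ hφ
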